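/- arXiv:0812.0405 — 5 statements merged into one kernel-verified Lean document; each statement's English description precedes it below -/
import Mathlib

section
/- Let m be the normalized Lebesgue measure on [0,π/2]², ν the Haar probability measure on SU(2), and m₁ the normalized Lebesgue measure on the interval (0,1/2). Then for every t ∈ [0,1], the probability measure λ_{2,t} = t · G_*(m × ν × ν × m₁ × ν) + (1−t) · g_*(m × ν × ν) on M₄(ℂ) assigns measure zero to the set of separable matrices; equivalently, a bipartite state γ_AB on ℂ² ⊗ ℂ² with rank γ_AB = 2 and rank γ_A = 2 is almost surely entangled with respect to λ_{2,t}. -/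
/-!
A separable state has a positive semidefinite partial transpose (Peres), the set of such
matrices is closed, and the property is invariant under conjugation by invertible local
operators `M ⊗ N`. Both `g((u,v),U,V)` and `G((u,v),U,V,x,W)` are such conjugates of
`g((u,v),1,1)` (for `G` because `(2ρ)^{1/2}` is invertible when `0 < x < 1`). On the vectors
`α e₀₁ + β e₁₀` the partial transpose of `g((u,v),1,1)` is the real quadratic form
`((1 - cos(u-v)) α² + 2 (cos u + cos v) α β + (1 - cos(u+v)) β²) / 4`, whose discriminant is
`16 cos u cos v`; this is positive for almost every `(u,v) ∈ [0,π/2]²`, so almost surely the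
sampled state is not PPT, hence entangled.
-/

open Matrix MeasureTheory Kronecker Metric
open scoped ComplexOrder ENNReal

noncomputable section

/-- Entrywise measurable-space structure on complex matrices. -/
instance matrixMeasurableSpace {m n : Type*} : MeasurableSpace (Matrix m n ℂ) :=
  inferInstanceAs (MeasurableSpace (m → n → ℂ))

/-- The special unitary group `SU(n)` of `n × n` complex matrices. -/
abbrev SU (n : ℕ) := Matrix.specialUnitaryGroup (Fin n) ℂ

/-- `|v⟩⟨v|`, the rank-one matrix `v v*`. -/
def ketBra {d : ℕ} (v : Fin d → ℂ) : Matrix (Fin d) (Fin d) ℂ :=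
  vecMulVec v (star v)

/-- A positive semidefinite matrix indexed by `(Fin dA) × (Fin dB)` is separable if it is
a finite positive combination of Kronecker products `|a⟩⟨a| ⊗ |b⟩⟨b|`. -/
def MatrixSeparable {dA dB : ℕ} (γ : Matrix (Fin dA × Fin dB) (Fin dA × Fin dB) ℂ) : Prop :=
  ∃ (n : ℕ) (lam : Fin n → ℝ) (a : Fin n → Fin dA → ℂ) (b : Fin n → Fin dB → ℂ),
    (∀ i, 0 ≤ lam i) ∧
      γ = ∑ i, (lam i : ℂ) • (ketBra (a i) ⊗ₖ ketBra (b i))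

/-- The Pauli matrices. -/
def σ1 : Matrix (Fin 2) (Fin 2) ℂ := !![0, 1; 1, 0]

def σ2 : Matrix (Fin 2) (Fin 2) ℂ := !![0, -Complex.I; Complex.I, 0]

def σ3 : Matrix (Fin 2) (Fin 2) ℂ := !![1, 0; 0, -1]

/-- The linear map `Φ_{u,v} : M₂(ℂ) → M₂(ℂ)` determined by
`Φ(I) = I + (sin u)(sin v) σ₃`, `Φ(σ₁) = (cos u) σ₁`, `Φ(σ₂) = (cos v) σ₂`,
`Φ(σ₃) = (cos u)(cos v) σ₃`. -/
def PhiUV (u v : ℝ) (ρ : Matrix (Fin 2) (Fin 2) ℂ) : Matrix (Fin 2) (Fin 2) ℂ :=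
  (ρ.trace / 2) • (1 + ((Real.sin u * Real.sin v : ℝ) : ℂ) • σ3)
    + ((σ1 * ρ).trace / 2 * ((Real.cos u : ℝ) : ℂ)) • σ1
    + ((σ2 * ρ).trace / 2 * ((Real.cos v : ℝ) : ℂ)) • σ2
    + ((σ3 * ρ).trace / 2 * ((Real.cos u * Real.cos v : ℝ) : ℂ)) • σ3

/-- The normalized Lebesgue (uniform probability) measure on the rectangle `[0,π/2]²`. -/
def mRect : Measure (ℝ × ℝ) :=
  (ENNReal.ofReal ((Real.pi / 2) ^ 2))⁻¹ •
    volume.restrict (Set.Icc (0 : ℝ) (Real.pi / 2) ×ˢ Set.Icc (0 : ℝ) (Real.pi / 2))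

/-- `g((u,v),U,V)` is the Choi matrix of the CPT map `ρ ↦ V Φ_{u,v}(U* ρ U) V*`, i.e.
`(1/2) Σ_{j,k} E_{jk} ⊗ (V Φ_{u,v}(U* E_{jk} U) V*)`. -/
def gMap (p : (ℝ × ℝ) × SU 2 × SU 2) : Matrix (Fin 2 × Fin 2) (Fin 2 × Fin 2) ℂ :=
  (1 / 2 : ℂ) • ∑ j : Fin 2, ∑ k : Fin 2,
    Matrix.single j k (1 : ℂ) ⊗ₖ
      ((p.2.2 : Matrix (Fin 2) (Fin 2) ℂ) *
        PhiUV p.1.1 p.1.2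
          ((p.2.1 : Matrix (Fin 2) (Fin 2) ℂ)ᴴ * Matrix.single j k (1 : ℂ) *
            (p.2.1 : Matrix (Fin 2) (Fin 2) ℂ)) *
        (p.2.2 : Matrix (Fin 2) (Fin 2) ℂ)ᴴ)

/-- The positive semidefinite square root of `2ρ`, where `ρ = W diag(x, 1-x) W*`. -/
def sqrtTwoRho (x : ℝ) (W : SU 2) : Matrix (Fin 2) (Fin 2) ℂ :=
  (W : Matrix (Fin 2) (Fin 2) ℂ) *
    diagonal ![((Real.sqrt (2 * x) : ℝ) : ℂ), ((Real.sqrt (2 * (1 - x)) : ℝ) : ℂ)] *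
    (W : Matrix (Fin 2) (Fin 2) ℂ)ᴴ

/-- `G((u,v),U,V,x,W) = ((2ρ)^{1/2} ⊗ I₂) g((u,v),U,V) ((2ρ)^{1/2} ⊗ I₂)` with
`ρ = W diag(x, 1-x) W*`. -/
def GMap (p : ((ℝ × ℝ) × SU 2 × SU 2) × ℝ × SU 2) :
    Matrix (Fin 2 × Fin 2) (Fin 2 × Fin 2) ℂ :=
  (sqrtTwoRho p.2.1 p.2.2 ⊗ₖ (1 : Matrix (Fin 2) (Fin 2) ℂ)) * gMap p.1 *
    (sqrtTwoRho p.2.1 p.2.2 ⊗ₖ (1 : Matrix (Fin 2) (Fin 2) ℂ))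

/-- The normalized Lebesgue measure on the interval `(0, 1/2)`. -/
def mHalfOpen : Measure ℝ :=
  (ENNReal.ofReal (1 / 2 : ℝ))⁻¹ • volume.restrict (Set.Ioo (0 : ℝ) (1 / 2))

section PartialTranspose

variable {ι κ : Type*}

def partialTranspose {α : Type*} (γ : Matrix (ι × κ) (ι × κ) α) : Matrix (ι × κ) (ι × κ) α :=
  of fun p q => γ (p.1, q.2) (q.1, p.2)

lemma partialTranspose_sum_smul_kronecker {R β : Type*} [CommSemiring R] (s : Finset β)
    (c : β → R) (A : β → Matrix ι ι R) (B : β → Matrix κ κ R) :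
    partialTranspose (∑ i ∈ s, c i • (A i ⊗ₖ B i)) = ∑ i ∈ s, c i • (A i ⊗ₖ (B i)ᵀ) := by
  ext p q
  simp [partialTranspose, Matrix.sum_apply]

lemma MatrixSeparable.posSemidef_partialTranspose {dA dB : ℕ}
    {γ : Matrix (Fin dA × Fin dB) (Fin dA × Fin dB) ℂ} (h : MatrixSeparable γ) :
    (partialTranspose γ).PosSemidef := by
  obtain ⟨n, lam, a, b, hlam, rfl⟩ := h
  rw [partialTranspose_sum_smul_kronecker]
  refine posSemidef_sum _ fun i _ => PosSemidef.smul ?_ (Complex.zero_le_real.mpr (hlam i))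
  rw [ketBra, ketBra, transpose_vecMulVec]
  exact (posSemidef_vecMulVec_self_star _).kronecker (posSemidef_vecMulVec_star_self _)

variable [Fintype ι] [Fintype κ]

lemma partialTranspose_conj_kronecker {R : Type*} [CommRing R] [StarRing R] (M : Matrix ι ι R)
    (N : Matrix κ κ R) (γ : Matrix (ι × κ) (ι × κ) R) :
    partialTranspose ((M ⊗ₖ N) * γ * (M ⊗ₖ N)ᴴ) =
      (M ⊗ₖ Nᴴᵀ) * partialTranspose γ * (M ⊗ₖ Nᴴᵀ)ᴴ := by
  ext ⟨i, j⟩ ⟨k, l⟩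
  simp only [partialTranspose, of_apply, mul_apply, conjTranspose_apply, transpose_apply,
    kroneckerMap_apply, Fintype.sum_prod_type, Finset.sum_mul, star_mul', star_star]
  refine Finset.sum_congr rfl fun c _ => ?_
  simp_rw [Finset.sum_comm (γ := ι)]
  rw [Finset.sum_comm]
  refine Finset.sum_congr rfl fun b _ => Finset.sum_congr rfl fun a _ =>
    Finset.sum_congr rfl fun d _ => ?_
  ring

lemma posSemidef_partialTranspose_conj_kronecker_iff [DecidableEq ι] [DecidableEq κ]
    {M : Matrix ι ι ℂ} {N : Matrix κ κ ℂ} (hM : IsUnit M) (hN : IsUnit N)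
    (γ : Matrix (ι × κ) (ι × κ) ℂ) :
    (partialTranspose ((M ⊗ₖ N) * γ * (M ⊗ₖ N)ᴴ)).PosSemidef ↔
      (partialTranspose γ).PosSemidef := by
  rw [partialTranspose_conj_kronecker, ← star_eq_conjTranspose]
  exact (hM.kronecker ((isUnit_transpose _).mpr ((isUnit_conjTranspose _).mpr hN)))
    |>.posSemidef_star_right_conjugate_iff

lemma isClosed_setOf_posSemidef {n : Type*} [Fintype n] :
    IsClosed {A : Matrix n n ℂ | A.PosSemidef} := by
  have : OrderClosedTopology ℂ := Complex.orderClosedTopology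
  simp only [posSemidef_iff_dotProduct_mulVec, Set.ofPred_and, Set.ofPred_forall]
  refine (isClosed_eq continuous_id.matrix_conjTranspose continuous_id).inter
    (isClosed_iInter fun x => isClosed_le continuous_const ?_)
  fun_prop

lemma isClosed_setOf_posSemidef_partialTranspose :
    IsClosed {γ : Matrix (ι × κ) (ι × κ) ℂ | (partialTranspose γ).PosSemidef} :=
  isClosed_setOf_posSemidef.preimage (by unfold partialTranspose; fun_prop)

end PartialTranspose

instance {m n : Type*} [Fintype m] [Fintype n] : BorelSpace (Matrix m n ℂ) :=
  inferInstanceAs (BorelSpace (m → n → ℂ))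

lemma MeasureTheory.Measure.map_apply_eq_zero_of_subset {α β : Type*} [MeasurableSpace α]
    [MeasurableSpace β] {μ : Measure α} {f : α → β} {s T : Set β} (hT : MeasurableSet T)
    (hsT : s ⊆ T) (h : ∀ᵐ a ∂μ, f a ∉ T) : μ.map f s = 0 := by
  by_cases hf : AEMeasurable f μ
  · refine measure_mono_null hsT ?_
    rw [Measure.map_apply_of_aemeasurable hf hT]
    exact measure_eq_zero_iff_ae_notMem.mpr h
  · simp [Measure.map_of_not_aemeasurable hf]

lemma map_setOf_matrixSeparable_eq_zero {α : Type*} [MeasurableSpace α] {μ : Measure α}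
    {dA dB : ℕ} {f : α → Matrix (Fin dA × Fin dB) (Fin dA × Fin dB) ℂ}
    (h : ∀ᵐ a ∂μ, ¬ (partialTranspose (f a)).PosSemidef) :
    μ.map f {γ | MatrixSeparable γ} = 0 :=
  Measure.map_apply_eq_zero_of_subset isClosed_setOf_posSemidef_partialTranspose.measurableSet
    (fun _ hγ => MatrixSeparable.posSemidef_partialTranspose hγ) h

lemma isUnit_coe_specialUnitaryGroup {n α : Type*} [Fintype n] [DecidableEq n] [CommRing α]
    [StarRing α] (U : specialUnitaryGroup n α) : IsUnit (U : Matrix n n α) :=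
  Unitary.isUnit_coe (U := (⟨U, specialUnitaryGroup_le_unitaryGroup U.2⟩ : unitaryGroup n α))

lemma sqrtTwoRho_posSemidef (x : ℝ) (W : SU 2) : (sqrtTwoRho x W).PosSemidef := by
  refine PosSemidef.mul_mul_conjTranspose_same (PosSemidef.diagonal fun i => ?_) _
  fin_cases i <;> exact Complex.zero_le_real.mpr (Real.sqrt_nonneg _)

lemma isUnit_sqrtTwoRho {x : ℝ} (hx : x ∈ Set.Ioo 0 1) (W : SU 2) :
    IsUnit (sqrtTwoRho x W) := by
  refine ((isUnit_coe_specialUnitaryGroup W).mul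
    (isUnit_diagonal.mpr (Pi.isUnit_iff.mpr fun i => ?_))).mul
    ((isUnit_conjTranspose _).mpr (isUnit_coe_specialUnitaryGroup W))
  fin_cases i <;> simp [Real.sqrt_eq_zero', hx.1, hx.2]

lemma GMap_eq_conj (p : (ℝ × ℝ) × SU 2 × SU 2) (x : ℝ) (W : SU 2) :
    GMap (p, x, W) = (sqrtTwoRho x W ⊗ₖ 1) * gMap p * (sqrtTwoRho x W ⊗ₖ 1)ᴴ := by
  rw [conjTranspose_kronecker, (sqrtTwoRho_posSemidef x W).isHermitian.eq, conjTranspose_one]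
  rfl

set_option maxHeartbeats 2000000 in
lemma gMap_eq_conj (u v : ℝ) (U V : SU 2) :
    gMap ((u, v), U, V) =
      ((U : Matrix (Fin 2) (Fin 2) ℂ)ᴴᵀ ⊗ₖ (V : Matrix (Fin 2) (Fin 2) ℂ)) * gMap ((u, v), 1, 1) *
        ((U : Matrix (Fin 2) (Fin 2) ℂ)ᴴᵀ ⊗ₖ (V : Matrix (Fin 2) (Fin 2) ℂ))ᴴ := by
  ext ⟨i₁, i₂⟩ ⟨j₁, j₂⟩
  simp only [gMap, PhiUV, σ1, σ2, σ3, Matrix.smul_apply, mul_apply, kroneckerMap_apply,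
    Matrix.add_apply, one_apply, trace, diag, Fin.sum_univ_two, Fintype.sum_prod_type, single,
    of_apply, transpose_apply, conjTranspose_apply, OneMemClass.coe_one]
  fin_cases i₁ <;> fin_cases i₂ <;> fin_cases j₁ <;> fin_cases j₂ <;> simp <;> ring

lemma dotProduct_mulVec_partialTranspose_gMap_one (u v α : ℝ) :
    let x : Fin 2 × Fin 2 → ℂ := fun p => !![0, (α : ℂ); 1, 0] p.1 p.2
    star x ⬝ᵥ (partialTranspose (gMap ((u, v), 1, 1)) *ᵥ x) =
      (((1 - Real.sin u * Real.sin v - Real.cos u * Real.cos v) * (α * α)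
        + 2 * (Real.cos u + Real.cos v) * α
        + (1 + Real.sin u * Real.sin v - Real.cos u * Real.cos v)) / 4 : ℝ) := by
  simp only [dotProduct, mulVec, partialTranspose, gMap, PhiUV, σ1, σ2, σ3, Matrix.smul_apply,
    mul_apply, kroneckerMap_apply, Matrix.add_apply, one_apply, trace, diag, Fin.sum_univ_two,
    Fintype.sum_prod_type, single, of_apply, conjTranspose_apply, OneMemClass.coe_one,
    Pi.star_apply, Fin.isValue, cons_val', cons_val_zero, cons_val_one, cons_val_fin_one,
    RCLike.star_def, map_zero, map_one, Complex.conj_ofReal, and_true, and_false, one_ne_zero,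
    zero_ne_one, ↓reduceIte, smul_eq_mul, one_div, mul_one, one_mul, mul_zero, zero_mul,
    add_zero, zero_add, mul_neg, zero_div, Complex.ofReal_mul, Complex.ofReal_sin,
    Complex.ofReal_cos, Complex.ofReal_div, Complex.ofReal_add, Complex.ofReal_sub,
    Complex.ofReal_one, Complex.ofReal_ofNat]
  ring_nf
  simp only [Complex.I_sq]
  ring

lemma discrim_eq_of_sin_sq_add_cos_sq {s c s' c' : ℝ} (h : s ^ 2 + c ^ 2 = 1)
    (h' : s' ^ 2 + c' ^ 2 = 1) :
    discrim (1 - s * s' - c * c') (2 * (c + c')) (1 + s * s' - c * c') = 16 * (c * c') := by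
  rw [discrim]
  linear_combination 4 * s' ^ 2 * h + 4 * (1 - c ^ 2) * h'

lemma not_posSemidef_partialTranspose_gMap_one {u v : ℝ} (h : 0 < Real.cos u * Real.cos v) :
    ¬ (partialTranspose (gMap ((u, v), 1, 1))).PosSemidef := by
  intro hpsd
  have hQ : ∀ α : ℝ, 0 ≤ (1 - Real.sin u * Real.sin v - Real.cos u * Real.cos v) * (α * α)
      + 2 * (Real.cos u + Real.cos v) * α
      + (1 + Real.sin u * Real.sin v - Real.cos u * Real.cos v) := fun α => by
    have := hpsd.dotProduct_mulVec_nonneg fun p => !![0, (α : ℂ); 1, 0] p.1 p.2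
    rw [dotProduct_mulVec_partialTranspose_gMap_one, Complex.zero_le_real] at this
    linarith
  have hdiscrim := discrim_le_zero hQ
  rw [discrim_eq_of_sin_sq_add_cos_sq (Real.sin_sq_add_cos_sq u) (Real.sin_sq_add_cos_sq v)]
    at hdiscrim
  linarith

lemma not_posSemidef_partialTranspose_gMap {u v : ℝ} (h : 0 < Real.cos u * Real.cos v)
    (U V : SU 2) : ¬ (partialTranspose (gMap ((u, v), U, V))).PosSemidef := by
  rw [gMap_eq_conj, posSemidef_partialTranspose_conj_kronecker_iff
    ((isUnit_transpose _).mpr ((isUnit_conjTranspose _).mpr (isUnit_coe_specialUnitaryGroup U)))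
    (isUnit_coe_specialUnitaryGroup V)]
  exact not_posSemidef_partialTranspose_gMap_one h

lemma not_posSemidef_partialTranspose_GMap {u v : ℝ} (h : 0 < Real.cos u * Real.cos v)
    (U V : SU 2) {x : ℝ} (hx : x ∈ Set.Ioo 0 1) (W : SU 2) :
    ¬ (partialTranspose (GMap (((u, v), U, V), x, W))).PosSemidef := by
  rw [GMap_eq_conj, posSemidef_partialTranspose_conj_kronecker_iff (isUnit_sqrtTwoRho hx W)
    isUnit_one]
  exact not_posSemidef_partialTranspose_gMap h U V

lemma ae_cos_ne_zero : ∀ᵐ y : ℝ, Real.cos y ≠ 0 := by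
  refine measure_eq_zero_iff_ae_notMem.mp (Set.Countable.measure_zero ?_ _)
  refine (Set.countable_range fun k : ℤ => (2 * k + 1) * Real.pi / 2).mono fun y hy => ?_
  obtain ⟨k, hk⟩ := Real.cos_eq_zero_iff.mp hy
  exact ⟨k, hk.symm⟩

lemma ae_mRect_cos_mul_cos_pos : ∀ᵐ q ∂mRect, 0 < Real.cos q.1 * Real.cos q.2 := by
  refine Measure.ae_smul_measure
    ((ae_restrict_iff' (measurableSet_Icc.prod measurableSet_Icc)).mpr ?_) _
  filter_upwards [Measure.quasiMeasurePreserving_fst.ae ae_cos_ne_zero,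
    Measure.quasiMeasurePreserving_snd.ae ae_cos_ne_zero] with q hu hv hq
  have hpi := Real.pi_pos
  exact mul_pos
    ((Real.cos_nonneg_of_mem_Icc ⟨by linarith [hq.1.1], hq.1.2⟩).lt_of_ne' hu)
    ((Real.cos_nonneg_of_mem_Icc ⟨by linarith [hq.2.1], hq.2.2⟩).lt_of_ne' hv)

lemma ae_mHalfOpen_mem_Ioo : ∀ᵐ x ∂mHalfOpen, x ∈ Set.Ioo (0 : ℝ) 1 := by
  refine Measure.ae_smul_measure ((ae_restrict_mem measurableSet_Ioo).mono fun x hx => ?_) _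
  exact ⟨hx.1, by linarith [hx.2]⟩

lemma ae_not_posSemidef_partialTranspose_gMap (ν : Measure (SU 2)) :
    ∀ᵐ p ∂mRect.prod (ν.prod ν), ¬ (partialTranspose (gMap p)).PosSemidef := by
  filter_upwards [Measure.quasiMeasurePreserving_fst.ae ae_mRect_cos_mul_cos_pos]
    with ⟨⟨u, v⟩, U, V⟩ h
  exact not_posSemidef_partialTranspose_gMap h U V

lemma ae_not_posSemidef_partialTranspose_GMap (ν : Measure (SU 2)) :
    ∀ᵐ p ∂(mRect.prod (ν.prod ν)).prod (mHalfOpen.prod ν),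
      ¬ (partialTranspose (GMap p)).PosSemidef := by
  filter_upwards [Measure.quasiMeasurePreserving_fst.ae
      (Measure.quasiMeasurePreserving_fst.ae ae_mRect_cos_mul_cos_pos),
    Measure.quasiMeasurePreserving_snd.ae
      (Measure.quasiMeasurePreserving_fst.ae ae_mHalfOpen_mem_Ioo)]
    with ⟨⟨⟨u, v⟩, U, V⟩, x, W⟩ h hx
  exact not_posSemidef_partialTranspose_GMap h U V hx W

theorem separable_measure_zero_rank_two_qubit_general
    (ν : Measure (SU 2)) (t : ℝ) :
    (ENNReal.ofReal t •
        Measure.map GMap ((mRect.prod (ν.prod ν)).prod (mHalfOpen.prod ν)) +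
      ENNReal.ofReal (1 - t) • Measure.map gMap (mRect.prod (ν.prod ν)))
      {γ | MatrixSeparable γ} = 0 := by
  rw [Measure.add_apply, Measure.smul_apply, Measure.smul_apply,
    map_setOf_matrixSeparable_eq_zero (ae_not_posSemidef_partialTranspose_GMap ν),
    map_setOf_matrixSeparable_eq_zero (ae_not_posSemidef_partialTranspose_gMap ν),
    smul_zero, smul_zero, add_zero]

/-- For every `t ∈ [0,1]`, the probability measure
`λ_{2,t} = t • G_*(m × ν × ν × m₁ × ν) + (1-t) • g_*(m × ν × ν)` on `M₄(ℂ)` assigns measure zero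
to the set of separable matrices: a bipartite state on `ℂ² ⊗ ℂ²` of rank 2 whose reduced density
matrix `γ_A` has rank 2 is almost surely entangled. -/
theorem separable_measure_zero_rank_two_qubit
    (ν : Measure (SU 2)) [IsProbabilityMeasure ν] [ν.IsMulLeftInvariant]
    (t : ℝ) (ht : t ∈ Set.Icc (0 : ℝ) 1) :
    (ENNReal.ofReal t •
        Measure.map GMap ((mRect.prod (ν.prod ν)).prod (mHalfOpen.prod ν)) +
      ENNReal.ofReal (1 - t) • Measure.map gMap (mRect.prod (ν.prod ν)))
      {γ | MatrixSeparable γ} = 0 :=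
  separable_measure_zero_rank_two_qubit_general ν t
end
end

section
/- Let γ_AB be a bipartite state on ℂ^{d_A} ⊗ ℂ^{d_B}. If rank γ_AB < d_A and rank γ_A = d_A (i.e. γ_A is invertible), then γ_AB is not separable. -/
open Matrix Kronecker
open scoped ComplexOrder

noncomputable section

/-- Partial trace over the `B` factor: `(Tr_B γ)_{jk} = Σ_m γ_{(j,m),(k,m)}`. -/
def trB {dA dB : ℕ} (γ : Matrix (Fin dA × Fin dB) (Fin dA × Fin dB) ℂ) :
    Matrix (Fin dA) (Fin dA) ℂ :=
  Matrix.of fun j k => ∑ m : Fin dB, γ (j, m) (k, m)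

/-- Partial trace over the `A` factor: `(Tr_A γ)_{mn} = Σ_j γ_{(j,m),(j,n)}`. -/
def trA {dA dB : ℕ} (γ : Matrix (Fin dA × Fin dB) (Fin dA × Fin dB) ℂ) :
    Matrix (Fin dB) (Fin dB) ℂ :=
  Matrix.of fun m n => ∑ j : Fin dA, γ (j, m) (j, n)

/-! If `γ = ∑ λᵢ |aᵢ⟩⟨aᵢ| ⊗ |bᵢ⟩⟨bᵢ|`, then `γ_A = ∑ λᵢ ‖bᵢ‖² |aᵢ⟩⟨aᵢ|`, so the `aᵢ` with
`λᵢ ‖bᵢ‖² ≠ 0` span `ℂ^{d_A}` and `d_A` of them are linearly independent. The corresponding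
product vectors `aᵢ ⊗ bᵢ` are then linearly independent too, and each lies in the range of `γ`,
a nonnegative combination of their projectors. Hence `rank γ ≥ d_A`. -/

open Module Submodule

section

variable {K α β ι : Type*} [Field K]

def kronVec (a : α → K) (b : β → K) : α × β → K := fun p => a p.1 * b p.2

theorem LinearIndependent.kronVec {a : ι → α → K} (ha : LinearIndependent K a)
    {b : ι → β → K} (hb : ∀ i, b i ≠ 0) :
    LinearIndependent K (fun i => kronVec (a i) (b i)) := by
  rw [linearIndependent_iff'] at ha ⊢
  intro s g hg i hi
  obtain ⟨m, hm⟩ := Function.ne_iff.mp (hb i)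
  have hslice : ∑ j ∈ s, (g j * b j m) • a j = 0 := by
    funext x
    simpa [_root_.kronVec, Finset.sum_apply, mul_comm, mul_left_comm, mul_assoc]
      using congrFun hg (x, m)
  exact (mul_eq_zero.mp (ha s _ hslice i hi)).resolve_right hm

theorem finrank_span_image_le_finrank_span_image_kronVec [Finite ι] [Finite α] [Finite β]
    (a : ι → α → K) (b : ι → β → K) (s : Set ι) (hb : ∀ i ∈ s, b i ≠ 0) :
    finrank K (span K (a '' s)) ≤ finrank K (span K ((fun i => kronVec (a i) (b i)) '' s)) := by
  obtain ⟨t, hts, hspan, hli⟩ := exists_linearIndependent K (a '' s)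
  choose f hfs hfa using fun x : t => hts x.2
  have : Fintype t := ((s.toFinite.image a).subset hts).fintype
  have hli' : LinearIndependent K (fun x : t => kronVec (a (f x)) (b (f x))) :=
    LinearIndependent.kronVec (by simpa [hfa] using hli) fun x => hb _ (hfs x)
  calc finrank K (span K (a '' s)) = Fintype.card t := by
        rw [← hspan, finrank_span_set_eq_card hli, Set.toFinset_card]
    _ = _ := (finrank_span_eq_card hli').symm
    _ ≤ _ := finrank_mono (span_mono (by rintro _ ⟨x, rfl⟩; exact ⟨f x, hfs x, rfl⟩))

theorem Matrix.rank_sum_smul_vecMulVec_le {m n : Type*} [Fintype m] [Fintype n] [Fintype ι]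
    (c : ι → K) (v : ι → m → K) (u : ι → n → K) :
    (∑ i, c i • vecMulVec (v i) (u i)).rank ≤ finrank K (span K (v '' {i | c i ≠ 0})) := by
  refine finrank_mono ?_
  rintro _ ⟨x, rfl⟩
  rw [mulVecLin_apply, sum_mulVec]
  refine sum_mem fun i _ => ?_
  by_cases hi : c i = 0
  · simp [hi]
  · rw [smul_mulVec, vecMulVec_mulVec, op_smul_eq_smul]
    exact smul_mem _ _ (smul_mem _ _ (subset_span ⟨i, hi, rfl⟩))

end

theorem Matrix.finrank_span_image_le_rank_sum_smul_vecMulVec {ι m : Type*} [Fintype m]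
    [Fintype ι] (lam : ι → ℝ) (hlam : ∀ i, 0 ≤ lam i) (v : ι → m → ℂ) :
    finrank ℂ (span ℂ (v '' {i | lam i ≠ 0})) ≤
      (∑ i, (lam i : ℂ) • vecMulVec (v i) (star (v i))).rank := by
  set B : Matrix m ι ℂ := of fun p i => (√(lam i) : ℂ) * v i p
  have hB : B * Bᴴ = ∑ i, (lam i : ℂ) • vecMulVec (v i) (star (v i)) := by
    ext p q
    simp only [B, mul_apply, conjTranspose_apply, of_apply, Matrix.sum_apply, smul_apply,
      vecMulVec_apply, Pi.star_apply, star_mul', Complex.star_def, Complex.conj_ofReal, smul_eq_mul]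
    refine Finset.sum_congr rfl fun i _ => ?_
    have : (√(lam i) : ℂ) * √(lam i) = lam i := by exact_mod_cast Real.mul_self_sqrt (hlam i)
    linear_combination (v i p * (starRingEnd ℂ) (v i q)) * this
  rw [← hB, rank_self_mul_conjTranspose, rank_eq_finrank_span_cols]
  refine finrank_mono (span_le.2 ?_)
  rintro _ ⟨i, hi, rfl⟩
  have hsqrt : (√(lam i) : ℂ) ≠ 0 := by exact_mod_cast (Real.sqrt_ne_zero (hlam i)).2 hi
  have : v i = (√(lam i) : ℂ)⁻¹ • B.col i := by
    funext p; simp [B, hsqrt]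
  rw [this]
  exact smul_mem _ _ (subset_span ⟨i, rfl⟩)

theorem ketBra_kronecker_ketBra {dA dB : ℕ} (a : Fin dA → ℂ) (b : Fin dB → ℂ) :
    ketBra a ⊗ₖ ketBra b = vecMulVec (kronVec a b) (star (kronVec a b)) := by
  ext ⟨j, m⟩ ⟨k, n⟩
  simp only [ketBra, kroneckerMap_apply, vecMulVec_apply, kronVec, Pi.star_apply, star_mul']
  ring

theorem trB_kronecker {dA dB : ℕ} (A : Matrix (Fin dA) (Fin dA) ℂ)
    (B : Matrix (Fin dB) (Fin dB) ℂ) :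
    trB (A ⊗ₖ B) = B.trace • A := by
  ext j k
  simp [trB, trace, Finset.mul_sum, mul_comm]

theorem trB_sum_smul {dA dB n : ℕ} (c : Fin n → ℂ)
    (M : Fin n → Matrix (Fin dA × Fin dB) (Fin dA × Fin dB) ℂ) :
    trB (∑ i, c i • M i) = ∑ i, c i • trB (M i) := by
  ext j k
  simp only [trB, of_apply, Matrix.sum_apply, Matrix.smul_apply, smul_eq_mul, Finset.mul_sum]
  exact Finset.sum_comm

theorem not_separable_of_rank_lt_dimA_general {dA dB : ℕ}
    (γ : Matrix (Fin dA × Fin dB) (Fin dA × Fin dB) ℂ)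
    (hrank : γ.rank < dA) (hrankA : (trB γ).rank = dA) :
    ¬ MatrixSeparable γ := by
  rintro ⟨n, lam, a, b, hlam, hγ⟩
  set s : Set (Fin n) := {i | (lam i : ℂ) * (ketBra (b i)).trace ≠ 0}
  have hs : ∀ i ∈ s, lam i ≠ 0 ∧ b i ≠ 0 :=
    fun i hi => ⟨fun h => hi (by simp [h]), fun h => hi (by simp [h, ketBra])⟩
  have hA : (trB γ).rank ≤ finrank ℂ (span ℂ (a '' s)) := by
    rw [hγ, trB_sum_smul]
    simp_rw [trB_kronecker, smul_smul]
    exact rank_sum_smul_vecMulVec_le _ _ _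
  have hAB := finrank_span_image_le_finrank_span_image_kronVec a b s fun i hi => (hs i hi).2
  have hB : finrank ℂ (span ℂ ((fun i => kronVec (a i) (b i)) '' s)) ≤ γ.rank := by
    rw [hγ]
    simp_rw [ketBra_kronecker_ketBra]
    exact (finrank_mono (span_mono (Set.image_mono fun i hi => (hs i hi).1))).trans
      (finrank_span_image_le_rank_sum_smul_vecMulVec lam hlam _)
  omega

/-- If a bipartite state `γ_AB` on `ℂ^{d_A} ⊗ ℂ^{d_B}` has
`rank γ_AB < d_A` and `rank γ_A = d_A`, then `γ_AB` is not separable. -/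
theorem not_separable_of_rank_lt_dimA {dA dB : ℕ}
    (γ : Matrix (Fin dA × Fin dB) (Fin dA × Fin dB) ℂ)
    (hpsd : γ.PosSemidef) (htr : γ.trace = 1)
    (hrank : γ.rank < dA) (hrankA : (trB γ).rank = dA) :
    ¬ MatrixSeparable γ :=
  not_separable_of_rank_lt_dimA_general γ hrank hrankA
end
end

section
/- Let γ be a positive semidefinite complex matrix indexed by (Fin d_A) × (Fin d_B) and let S ∈ M_{d_A}(ℂ) be invertible. Then γ is separable if and only if (S ⊗ I_{d_B}) γ (S* ⊗ I_{d_B}) is separable. -/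
open Matrix Kronecker
open scoped ComplexOrder

noncomputable section

lemma conj_ketBra {d : ℕ} (S : Matrix (Fin d) (Fin d) ℂ) (a : Fin d → ℂ) :
    S * ketBra a * Sᴴ = ketBra (S *ᵥ a) := by
  ext i j
  simp only [ketBra, mul_apply, vecMulVec_apply, mulVec, dotProduct, conjTranspose_apply,
    Pi.star_apply, Finset.sum_mul, Finset.mul_sum]
  rw [Finset.sum_comm]
  simp only [star_sum, star_mul', Finset.mul_sum]
  apply Finset.sum_congr rfl; intro k _
  apply Finset.sum_congr rfl; intro l _
  ring

lemma sep_conj {dA dB : ℕ} (γ : Matrix (Fin dA × Fin dB) (Fin dA × Fin dB) ℂ)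
    (S : Matrix (Fin dA) (Fin dA) ℂ)
    (h : ∃ (n : ℕ) (lam : Fin n → ℝ) (a : Fin n → Fin dA → ℂ) (b : Fin n → Fin dB → ℂ),
      (∀ i, 0 ≤ lam i) ∧ γ = ∑ i, (lam i : ℂ) • (ketBra (a i) ⊗ₖ ketBra (b i))) :
    ∃ (n : ℕ) (lam : Fin n → ℝ) (a : Fin n → Fin dA → ℂ) (b : Fin n → Fin dB → ℂ),
      (∀ i, 0 ≤ lam i) ∧
        (S ⊗ₖ (1 : Matrix (Fin dB) (Fin dB) ℂ)) * γ * (Sᴴ ⊗ₖ (1 : Matrix (Fin dB) (Fin dB) ℂ))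
          = ∑ i, (lam i : ℂ) • (ketBra (a i) ⊗ₖ ketBra (b i)) := by
  obtain ⟨n, lam, a, b, hlam, rfl⟩ := h
  refine ⟨n, lam, fun i => S *ᵥ a i, b, hlam, ?_⟩
  rw [Finset.mul_sum, Finset.sum_mul]
  apply Finset.sum_congr rfl; intro i _
  rw [Matrix.mul_smul, Matrix.smul_mul]
  congr 1
  rw [← Matrix.mul_kronecker_mul, ← Matrix.mul_kronecker_mul, Matrix.one_mul, Matrix.mul_one,
    conj_ketBra]

/-- For an invertible `S ∈ M_{d_A}(ℂ)`, a positive semidefinite `γ` is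
separable if and only if `(S ⊗ I) γ (S* ⊗ I)` is separable. -/
theorem separable_conj_invertible_iff {dA dB : ℕ}
    (γ : Matrix (Fin dA × Fin dB) (Fin dA × Fin dB) ℂ) (hpsd : γ.PosSemidef)
    (S : Matrix (Fin dA) (Fin dA) ℂ) (hS : IsUnit S) :
    MatrixSeparable γ ↔
      MatrixSeparable
        ((S ⊗ₖ (1 : Matrix (Fin dB) (Fin dB) ℂ)) * γ *
          (Sᴴ ⊗ₖ (1 : Matrix (Fin dB) (Fin dB) ℂ))) := by
  unfold MatrixSeparable
  constructor
  · exact sep_conj γ S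
  · intro h
    have h2 := sep_conj _ S⁻¹ h
    have hinv : S⁻¹ * S = 1 := nonsing_inv_mul S (isUnit_iff_isUnit_det S |>.mp hS)
    have hinv2 : Sᴴ * S⁻¹ᴴ = 1 := by
      rw [← conjTranspose_mul, hinv, conjTranspose_one]
    have key : (S⁻¹ ⊗ₖ (1 : Matrix (Fin dB) (Fin dB) ℂ)) *
        ((S ⊗ₖ (1 : Matrix (Fin dB) (Fin dB) ℂ)) * γ * (Sᴴ ⊗ₖ (1 : Matrix (Fin dB) (Fin dB) ℂ))) *
        (S⁻¹ᴴ ⊗ₖ (1 : Matrix (Fin dB) (Fin dB) ℂ)) = γ := by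
      rw [Matrix.mul_assoc, Matrix.mul_assoc, ← Matrix.mul_kronecker_mul, hinv2, Matrix.one_mul,
        Matrix.one_kronecker_one, Matrix.mul_one, ← Matrix.mul_assoc, ← Matrix.mul_kronecker_mul,
        hinv, Matrix.one_mul, Matrix.one_kronecker_one, Matrix.one_mul]
    rwa [key] at h2
end
end

section
/- Let d_A ≥ 3, d_B ≥ 1. Let Q be a positive semidefinite matrix indexed by (Fin d_A) × (Fin d_B) that is supported on the first two values of the A-index (i.e. Q_{(j,m),(k,n)} = 0 unless j, k ∈ {1,2}) and satisfies Tr_B Q = |e₁⟩⟨e₁| + |e₂⟩⟨e₂| (so Tr Q = 2), and let ψ₃,…,ψ_{d_A} be unit vectors in ℂ^{d_B}. Then γ = (1/d_A) ( Q + Σ_{k=3}^{d_A} E_{kk} ⊗ |ψ_k⟩⟨ψ_k| ) is a bipartite state on ℂ^{d_A} ⊗ ℂ^{d_B}, and γ is separable if and only if (1/2) Q is separable. -/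
open Matrix Kronecker
open scoped ComplexOrder

noncomputable section

/-!
Separable matrices form a convex cone that is stable under local operations
`γ ↦ (M ⊗ N) γ (M ⊗ N)*`. Every tail term `E_kk ⊗ |ψ_k⟩⟨ψ_k|` is a product, so `γ` is separable
as soon as `Q` is. Conversely, compressing `γ` by `P ⊗ 1`, with `P` the projection onto
`span {e₁, e₂}`, annihilates the tail and fixes the block `Q`, which lives in that span; hence it
maps `γ` to `Q / d_A`. Positivity and the trace are read off termwise, using `Tr Q = Tr (Tr_B Q) = 2`.
-/

lemma single_one_eq_ketBra {d : ℕ} (k : Fin d) :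
    Matrix.single k k (1 : ℂ) = ketBra (Pi.single k 1) := by
  rw [single_eq_single_vecMulVec_single, ketBra, Pi.star_single, star_one]

lemma trace_ketBra {d : ℕ} (v : Fin d → ℂ) : (ketBra v).trace = star v ⬝ᵥ v := by
  rw [ketBra, trace_vecMulVec, dotProduct_comm]

lemma mul_ketBra_mul_conjTranspose {d d' : ℕ} (M : Matrix (Fin d') (Fin d) ℂ) (v : Fin d → ℂ) :
    M * ketBra v * Mᴴ = ketBra (M *ᵥ v) := by
  rw [ketBra, ketBra, mul_vecMulVec, vecMulVec_mul, star_mulVec]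

lemma trace_trB {dA dB : ℕ} (γ : Matrix (Fin dA × Fin dB) (Fin dA × Fin dB) ℂ) :
    (trB γ).trace = γ.trace := by
  simp [Matrix.trace, trB, Fintype.sum_prod_type]

namespace MatrixSeparable

variable {dA dB : ℕ}

lemma zero : MatrixSeparable (0 : Matrix (Fin dA × Fin dB) (Fin dA × Fin dB) ℂ) :=
  ⟨0, Fin.elim0, Fin.elim0, Fin.elim0, fun i => i.elim0, by simp⟩

lemma ketBra_kronecker (a : Fin dA → ℂ) (b : Fin dB → ℂ) :
    MatrixSeparable (ketBra a ⊗ₖ ketBra b) :=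
  ⟨1, fun _ => 1, fun _ => a, fun _ => b, fun _ => zero_le_one, by simp⟩

lemma smul {γ : Matrix (Fin dA × Fin dB) (Fin dA × Fin dB) ℂ} (h : MatrixSeparable γ)
    {c : ℝ} (hc : 0 ≤ c) : MatrixSeparable ((c : ℂ) • γ) := by
  obtain ⟨n, lam, a, b, hlam, rfl⟩ := h
  refine ⟨n, fun i => c * lam i, a, b, fun i => mul_nonneg hc (hlam i), ?_⟩
  simp only [Finset.smul_sum, smul_smul, Complex.ofReal_mul]

lemma smul_iff {γ : Matrix (Fin dA × Fin dB) (Fin dA × Fin dB) ℂ} {c : ℝ} (hc : 0 < c) :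
    MatrixSeparable ((c : ℂ) • γ) ↔ MatrixSeparable γ := by
  refine ⟨fun h => ?_, fun h => h.smul hc.le⟩
  have hc' : (c : ℂ) ≠ 0 := Complex.ofReal_ne_zero.mpr hc.ne'
  have h' := h.smul (inv_nonneg.mpr hc.le)
  rwa [Complex.ofReal_inv, smul_smul, inv_mul_cancel₀ hc', one_smul] at h'

lemma add {γ₁ γ₂ : Matrix (Fin dA × Fin dB) (Fin dA × Fin dB) ℂ}
    (h₁ : MatrixSeparable γ₁) (h₂ : MatrixSeparable γ₂) : MatrixSeparable (γ₁ + γ₂) := by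
  obtain ⟨n₁, lam₁, a₁, b₁, hlam₁, rfl⟩ := h₁
  obtain ⟨n₂, lam₂, a₂, b₂, hlam₂, rfl⟩ := h₂
  refine ⟨n₁ + n₂, Fin.append lam₁ lam₂, Fin.append a₁ a₂, Fin.append b₁ b₂,
    Fin.addCases (by simpa using hlam₁) (by simpa using hlam₂), ?_⟩
  simp [Fin.sum_univ_add]

lemma sum {ι : Type*} (s : Finset ι) {γ : ι → Matrix (Fin dA × Fin dB) (Fin dA × Fin dB) ℂ}
    (h : ∀ i ∈ s, MatrixSeparable (γ i)) : MatrixSeparable (∑ i ∈ s, γ i) :=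
  Finset.sum_induction γ MatrixSeparable (fun _ _ => add) zero h

lemma kronecker_mul_mul_conjTranspose {γ : Matrix (Fin dA × Fin dB) (Fin dA × Fin dB) ℂ}
    (h : MatrixSeparable γ) {dA' dB' : ℕ} (M : Matrix (Fin dA') (Fin dA) ℂ)
    (N : Matrix (Fin dB') (Fin dB) ℂ) :
    MatrixSeparable ((M ⊗ₖ N) * γ * (M ⊗ₖ N)ᴴ) := by
  obtain ⟨n, lam, a, b, hlam, rfl⟩ := h
  refine ⟨n, lam, fun i => M *ᵥ a i, fun i => N *ᵥ b i, hlam, ?_⟩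
  simp only [Matrix.mul_sum, Matrix.sum_mul, Matrix.mul_smul, Matrix.smul_mul,
    conjTranspose_kronecker, ← mul_kronecker_mul, mul_ketBra_mul_conjTranspose]

end MatrixSeparable

section BlockState

variable {dA dB : ℕ}

/-- `Σ_{k ≥ 3} E_{kk} ⊗ |ψ_k⟩⟨ψ_k|`; indices start at `0`, so `ψ k` is the paper's `ψ_{k+3}`. -/
def productTail (ψ : Fin (dA - 2) → Fin dB → ℂ) : Matrix (Fin dA × Fin dB) (Fin dA × Fin dB) ℂ :=
  ∑ k : Fin (dA - 2),
    Matrix.single (⟨(k : ℕ) + 2, by have := k.isLt; omega⟩ : Fin dA)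
        (⟨(k : ℕ) + 2, by have := k.isLt; omega⟩ : Fin dA) (1 : ℂ) ⊗ₖ ketBra (ψ k)

lemma productTail_eq_sum_ketBra_kronecker (ψ : Fin (dA - 2) → Fin dB → ℂ) :
    productTail ψ = ∑ k : Fin (dA - 2),
      ketBra (Pi.single (⟨(k : ℕ) + 2, by have := k.isLt; omega⟩ : Fin dA) 1) ⊗ₖ ketBra (ψ k) := by
  simp only [productTail, single_one_eq_ketBra]

lemma posSemidef_productTail (ψ : Fin (dA - 2) → Fin dB → ℂ) : (productTail ψ).PosSemidef := by
  rw [productTail_eq_sum_ketBra_kronecker]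
  exact posSemidef_sum _ fun k _ =>
    (posSemidef_vecMulVec_self_star _).kronecker (posSemidef_vecMulVec_self_star _)

lemma MatrixSeparable.productTail (ψ : Fin (dA - 2) → Fin dB → ℂ) :
    MatrixSeparable (productTail ψ) := by
  rw [productTail_eq_sum_ketBra_kronecker]
  exact MatrixSeparable.sum _ fun k _ => MatrixSeparable.ketBra_kronecker _ _

lemma trace_productTail {ψ : Fin (dA - 2) → Fin dB → ℂ} (hψ : ∀ k, star (ψ k) ⬝ᵥ ψ k = 1) :
    (productTail ψ).trace = (dA - 2 : ℕ) := by
  simp [productTail, trace_sum, trace_kronecker, trace_single_eq_same, trace_ketBra, hψ]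

def firstTwoProj (dA : ℕ) : Matrix (Fin dA) (Fin dA) ℂ :=
  diagonal fun j => if (j : ℕ) < 2 then 1 else 0

lemma firstTwoProj_kronecker_one_conj_of_support
    {X : Matrix (Fin dA × Fin dB) (Fin dA × Fin dB) ℂ}
    (hX : ∀ p q : Fin dA × Fin dB, ¬((p.1 : ℕ) < 2 ∧ (q.1 : ℕ) < 2) → X p q = 0) :
    (firstTwoProj dA ⊗ₖ (1 : Matrix (Fin dB) (Fin dB) ℂ)) * X *
      (firstTwoProj dA ⊗ₖ (1 : Matrix (Fin dB) (Fin dB) ℂ))ᴴ = X := by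
  ext p q
  rw [firstTwoProj, ← diagonal_one, diagonal_kronecker_diagonal, diagonal_conjTranspose,
    mul_diagonal, diagonal_mul]
  simp only [Pi.star_apply, apply_ite star, star_one, star_zero, mul_one]
  by_cases h : (p.1 : ℕ) < 2 ∧ (q.1 : ℕ) < 2
  · rw [if_pos h.1, if_pos h.2, one_mul, mul_one]
  · simp [hX p q h]

lemma firstTwoProj_kronecker_one_conj_productTail (ψ : Fin (dA - 2) → Fin dB → ℂ) :
    (firstTwoProj dA ⊗ₖ (1 : Matrix (Fin dB) (Fin dB) ℂ)) * productTail ψ *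
      (firstTwoProj dA ⊗ₖ (1 : Matrix (Fin dB) (Fin dB) ℂ))ᴴ = 0 := by
  simp only [productTail_eq_sum_ketBra_kronecker, Matrix.mul_sum, Matrix.sum_mul,
    conjTranspose_kronecker, ← mul_kronecker_mul, mul_ketBra_mul_conjTranspose, firstTwoProj,
    diagonal_mulVec_single]
  simp [ketBra]

lemma separable_add_productTail_iff {Q : Matrix (Fin dA × Fin dB) (Fin dA × Fin dB) ℂ}
    (hsupp : ∀ p q : Fin dA × Fin dB, ¬((p.1 : ℕ) < 2 ∧ (q.1 : ℕ) < 2) → Q p q = 0)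
    (ψ : Fin (dA - 2) → Fin dB → ℂ) :
    MatrixSeparable (Q + productTail ψ) ↔ MatrixSeparable Q := by
  refine ⟨fun h => ?_, fun h => h.add (.productTail ψ)⟩
  simpa [Matrix.mul_add, Matrix.add_mul, firstTwoProj_kronecker_one_conj_of_support hsupp,
    firstTwoProj_kronecker_one_conj_productTail] using
    h.kronecker_mul_mul_conjTranspose (firstTwoProj dA) (1 : Matrix (Fin dB) (Fin dB) ℂ)

end BlockState

/-- Let `Q` be positive semidefinite on `ℂ^{d_A} ⊗ ℂ^{d_B}` (`d_A ≥ 3`),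
supported on the first two values of the `A`-index, with `Tr_B Q = |e₁⟩⟨e₁| + |e₂⟩⟨e₂|`, and
let `ψ₃, …, ψ_{d_A}` be unit vectors in `ℂ^{d_B}`. Then
`γ = (1/d_A)(Q + Σ_{k=3}^{d_A} E_{kk} ⊗ |ψ_k⟩⟨ψ_k|)` is a bipartite state, and `γ` is
separable if and only if `(1/2) Q` is separable. -/
theorem separable_block_state_iff {dA dB : ℕ} (hA : 3 ≤ dA)
    (Q : Matrix (Fin dA × Fin dB) (Fin dA × Fin dB) ℂ) (hQ : Q.PosSemidef)
    (hsupp : ∀ p q : Fin dA × Fin dB, ¬((p.1 : ℕ) < 2 ∧ (q.1 : ℕ) < 2) → Q p q = 0)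
    (htrB : trB Q =
      Matrix.single (⟨0, by omega⟩ : Fin dA) (⟨0, by omega⟩ : Fin dA) (1 : ℂ) +
        Matrix.single (⟨1, by omega⟩ : Fin dA) (⟨1, by omega⟩ : Fin dA) (1 : ℂ))
    (ψ : Fin (dA - 2) → Fin dB → ℂ) (hψ : ∀ k, star (ψ k) ⬝ᵥ ψ k = 1)
    (γ : Matrix (Fin dA × Fin dB) (Fin dA × Fin dB) ℂ)
    (hγ : γ = ((dA : ℂ))⁻¹ •
      (Q + ∑ k : Fin (dA - 2),
        Matrix.single (⟨(k : ℕ) + 2, by have := k.isLt; omega⟩ : Fin dA)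
            (⟨(k : ℕ) + 2, by have := k.isLt; omega⟩ : Fin dA) (1 : ℂ) ⊗ₖ ketBra (ψ k))) :
    γ.PosSemidef ∧ γ.trace = 1 ∧
      (MatrixSeparable γ ↔ MatrixSeparable ((1 / 2 : ℂ) • Q)) := by
  have hdA : (0 : ℝ) < dA := by exact_mod_cast (by omega : 0 < dA)
  have hγ' : γ = (((dA : ℝ)⁻¹ : ℝ) : ℂ) • (Q + productTail ψ) := by
    rw [hγ, productTail]
    push_cast
    rfl
  have htrQ : Q.trace = 2 := by
    rw [← trace_trB, htrB, trace_add, trace_single_eq_same, trace_single_eq_same]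
    norm_num
  refine ⟨?_, ?_, ?_⟩
  · rw [hγ']
    exact (hQ.add (posSemidef_productTail ψ)).smul
      (Complex.zero_le_real.mpr (inv_nonneg.mpr hdA.le))
  · rw [hγ', trace_smul, trace_add, htrQ, trace_productTail hψ, Nat.cast_sub (by omega)]
    push_cast
    rw [add_sub_cancel, smul_eq_mul, inv_mul_cancel₀ (by exact_mod_cast hdA.ne')]
  · have hhalf : (1 / 2 : ℂ) = ((1 / 2 : ℝ) : ℂ) := by push_cast; rfl
    rw [hγ', hhalf, MatrixSeparable.smul_iff (inv_pos.mpr hdA),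
      MatrixSeparable.smul_iff (by norm_num), separable_add_productTail_iff hsupp]
end
end

section
/- Let A₁,…,A_n and B₁,…,B_n be d_B × d_A complex matrices such that the n² matrices {B_j* B_k : 1 ≤ j, k ≤ n} are linearly independent in M_{d_A}(ℂ). Then there exists ε* > 0 such that for every real ε with 0 < ε < ε*, the n² matrices {(A_j + ε B_j)* (A_k + ε B_k) : 1 ≤ j, k ≤ n} are linearly independent in M_{d_A}(ℂ). -/
/-!
Put `t = ε⁻¹`. Up to the nonzero factor `ε²`, the perturbed family is
`t² AⱼᴴAₖ + t (AⱼᴴBₖ + BⱼᴴAₖ) + BⱼᴴBₖ`, a polynomial family in `t` which at `t = 0` is the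
independent family `BⱼᴴBₖ`. Pairing with functionals dual to that family turns independence
into the nonvanishing of a determinant, a polynomial in `t` with value `1` at `t = 0`. It has
finitely many roots, so the family is independent for all large `|t|`, i.e. all small `ε`.
-/

open Matrix Polynomial Filter Topology

theorem LinearIndependent.exists_linearMap_apply_eq_single {K V ι : Type*} [Field K]
    [AddCommGroup V] [Module K V] [Fintype ι] [DecidableEq ι] {v : ι → V}
    (hv : LinearIndependent K v) : ∃ Φ : V →ₗ[K] ι → K, ∀ i, Φ (v i) = Pi.single i 1 := by
  obtain ⟨Φ, hΦ⟩ := (Fintype.linearCombination K v).exists_leftInverse_of_injective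
    (LinearMap.ker_eq_bot.mpr hv.fintypeLinearCombination_injective)
  refine ⟨Φ, fun i => ?_⟩
  simpa [Fintype.linearCombination_apply_single] using LinearMap.congr_fun hΦ (Pi.single i 1)

theorem linearIndependent_of_det_comp_ne_zero {K V ι : Type*} [Field K]
    [AddCommGroup V] [Module K V] [Fintype ι] [DecidableEq ι] {v : ι → V}
    (Φ : V →ₗ[K] ι → K) (h : (Matrix.of (Φ ∘ v)).det ≠ 0) : LinearIndependent K v :=
  .of_comp Φ (linearIndependent_rows_of_det_ne_zero h)

theorem LinearIndependent.eventually_cofinite_sum_pow_smul {K V ι : Type*} [Field K]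
    [AddCommGroup V] [Module K V] [Fintype ι] {m : ℕ} (c : Fin m → ι → V) {t₀ : K}
    (h : LinearIndependent K fun i => ∑ k : Fin m, t₀ ^ (k : ℕ) • c k i) :
    ∀ᶠ t : K in cofinite, LinearIndependent K fun i => ∑ k : Fin m, t ^ (k : ℕ) • c k i := by
  classical
  obtain ⟨Φ, hΦ⟩ := h.exists_linearMap_apply_eq_single
  let q : K[X] := (Matrix.of fun i a => ∑ k : Fin m, C (Φ (c k i) a) * X ^ (k : ℕ)).det
  have hq : ∀ t, q.eval t = (Matrix.of (Φ ∘ fun i => ∑ k : Fin m, t ^ (k : ℕ) • c k i)).det := by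
    intro t
    rw [← coe_evalRingHom, RingHom.map_det]
    congr 1
    ext i a
    simp [eval_finsetSum, mul_comm (_ ^ _)]
  have hq₀ : q ≠ 0 := fun h0 => by
    have hI : Matrix.of (Φ ∘ fun i => ∑ k : Fin m, t₀ ^ (k : ℕ) • c k i) = 1 := by
      ext i a
      simp [hΦ, one_eq_pi_single]
    simpa [h0, hI] using hq t₀
  refine q.roots.toFinset.eventually_cofinite_notMem.mono fun t ht => ?_
  refine linearIndependent_of_det_comp_ne_zero Φ ?_
  rw [← hq]
  simpa [hq₀] using ht

theorem Matrix.conjTranspose_add_smul_mul_add_smul {𝕜 : Type*} [Field 𝕜] [StarRing 𝕜]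
    {m n : Type*} [Fintype m] (A B A' B' : Matrix m n 𝕜) {ε : 𝕜} (hε : ε ≠ 0)
    (hε_star : star ε = ε) :
    (A + ε • B)ᴴ * (A' + ε • B') =
      ε ^ 2 • (Bᴴ * B' + ε⁻¹ • (Aᴴ * B' + Bᴴ * A') + ε⁻¹ ^ 2 • (Aᴴ * A')) := by
  simp only [conjTranspose_add, conjTranspose_smul, hε_star, Matrix.add_mul, Matrix.mul_add,
    Matrix.smul_mul, Matrix.mul_smul, smul_add, smul_smul]
  field_simp
  rw [one_smul]
  abel

theorem tendsto_ofReal_inv_nhdsGT_zero_cofinite :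
    Tendsto (fun ε : ℝ => (ε : ℂ)⁻¹) (𝓝[>] 0) cofinite := by
  have hne : Tendsto (fun ε : ℝ => (ε : ℂ)) (𝓝[>] 0) (𝓝[≠] 0) := by
    simpa using Complex.continuous_ofReal.continuousWithinAt.tendsto_nhdsWithin
      (s := Set.Ioi 0) (t := {0}ᶜ) (x := 0) fun ε hε => by simpa using hε.ne'
  exact ((Metric.cobounded_eq_cocompact (α := ℂ) ▸ tendsto_inv₀_nhdsNE_zero).mono_right
    cocompact_le_cofinite).comp hne

/-- If the `n²` matrices `B_j* B_k` are linearly independent, then for all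
sufficiently small `ε > 0` the matrices `(A_j + ε B_j)* (A_k + ε B_k)` are linearly
independent. -/
theorem linearIndependent_perturbation {dA dB n : ℕ}
    (A B : Fin n → Matrix (Fin dB) (Fin dA) ℂ)
    (hB : LinearIndependent ℂ fun jk : Fin n × Fin n => (B jk.1)ᴴ * B jk.2) :
    ∃ εstar : ℝ, 0 < εstar ∧ ∀ ε : ℝ, 0 < ε → ε < εstar →
      LinearIndependent ℂ fun jk : Fin n × Fin n =>
        (A jk.1 + (ε : ℂ) • B jk.1)ᴴ * (A jk.2 + (ε : ℂ) • B jk.2) := by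
  let c : Fin 3 → Fin n × Fin n → Matrix (Fin dA) (Fin dA) ℂ :=
    ![fun jk => (B jk.1)ᴴ * B jk.2, fun jk => (A jk.1)ᴴ * B jk.2 + (B jk.1)ᴴ * A jk.2,
      fun jk => (A jk.1)ᴴ * A jk.2]
  have hc₀ : LinearIndependent ℂ fun jk => ∑ k : Fin 3, (0 : ℂ) ^ (k : ℕ) • c k jk := by
    simpa [Fin.sum_univ_three, c] using hB
  have hsmall := tendsto_ofReal_inv_nhdsGT_zero_cofinite.eventually
    (LinearIndependent.eventually_cofinite_sum_pow_smul c hc₀)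
  obtain ⟨εstar, hεstar, hind⟩ := (nhdsGT_basis (0 : ℝ)).eventually_iff.mp hsmall
  refine ⟨εstar, hεstar, fun ε hε hεlt => ?_⟩
  have hlin := hind ⟨hε, hεlt⟩
  have hε' : (ε : ℂ) ≠ 0 := Complex.ofReal_ne_zero.mpr hε.ne'
  have hscale : ∀ jk : Fin n × Fin n, (A jk.1 + (ε : ℂ) • B jk.1)ᴴ * (A jk.2 + (ε : ℂ) • B jk.2) =
      (ε : ℂ) ^ 2 • ∑ k : Fin 3, ((ε : ℂ)⁻¹) ^ (k : ℕ) • c k jk := fun jk => by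
    rw [conjTranspose_add_smul_mul_add_smul _ _ _ _ hε' (Complex.conj_ofReal ε)]
    simp [Fin.sum_univ_three, c]
  simp only [hscale]
  exact hlin.units_smul fun _ => Units.mk0 _ (pow_ne_zero 2 hε')
end
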